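/- Let A_j, B_j (1 ≤ j ≤ n) be d×d positive definite complex matrices and let s, t satisfy either 1 ≥ t ≥ s > 1/2 or 0 ≤ t ≤ s < 1/2. Write S_u = Σ_{j=1}^n (A_j ♯_u B_j) for u ∈ [0,1] and G = Σ_{j=1}^n (A_j ♯ B_j). Then S_s ∘ S_{1−s} + ((t − s)/(s − 1/2)) · (S_s ∘ S_{1−s} − G ∘ G) ≤ S_t ∘ S_{1−t}, where ∘ is the Hadamard (entrywise) product and ≤ is the Loewner order. In particular (since the added term is positive semidefinite), S_s ∘ S_{1−s} ≤ S_t ∘ S_{1−t}. -/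

import Mathlib

open Matrix Kronecker
open scoped ComplexOrder

/-- Real power `A^r` of a positive definite matrix, via the (continuous)
functional calculus on selfadjoint matrices. -/
noncomputable def mpow {d : ℕ} (A : Matrix (Fin d) (Fin d) ℂ) (r : ℝ) :
    Matrix (Fin d) (Fin d) ℂ :=
  cfc (fun x : ℝ => x ^ r) A

/-- The weighted matrix geometric mean
`A ♯_μ B = A^{1/2}(A^{-1/2} B A^{-1/2})^μ A^{1/2}`. -/
noncomputable def mwgm {d : ℕ} (μ : ℝ) (A B : Matrix (Fin d) (Fin d) ℂ) :
    Matrix (Fin d) (Fin d) ℂ :=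
  mpow A (1/2) * mpow (mpow A (-(1/2)) * B * mpow A (-(1/2))) μ * mpow A (1/2)

/-!
Diagonalising `A^{-1/2} B A^{-1/2} = Σᵢ λᵢ uᵢuᵢ*` gives `A ♯_μ B = Σᵢ λᵢ^μ Rᵢ` with
`Rᵢ = A^{1/2} uᵢuᵢ* A^{1/2} ≥ 0`, so after merging the indices of all the pairs `(Aⱼ, Bⱼ)`,
`S_u ∘ S_v = Σ_{p,q} λ_p^u λ_q^v (R_p ∘ R_q)`. Such a combination only depends on the
symmetrised weights, and by the Schur product theorem it is positive semidefinite as soon as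
these are nonnegative. Here the symmetrised weights are combinations of values of the Heinz mean
`u ↦ (x^u y^{1-u} + x^{1-u} y^u) / 2` at `x = λ_p`, `y = λ_q`, which is convex in `u` and
symmetric about `1/2`; the scalar inequality is then monotonicity of the slopes of a convex
function, and the second claim follows from the first because `S_s ∘ S_{1-s} - G ∘ G ≥ 0`.
-/
noncomputable def heinzMean (x y u : ℝ) : ℝ :=
  (x ^ u * y ^ (1 - u) + x ^ (1 - u) * y ^ u) / 2

lemma heinzMean_one_sub (x y u : ℝ) : heinzMean x y (1 - u) = heinzMean x y u := by
  rw [heinzMean, heinzMean, sub_sub_cancel, add_comm]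

lemma two_mul_heinzMean (x y u : ℝ) :
    2 * heinzMean x y u = x ^ u * y ^ (1 - u) + y ^ u * x ^ (1 - u) := by
  rw [heinzMean]; ring

lemma heinzMean_half (x y : ℝ) : heinzMean x y (1 / 2) = x ^ (1 / 2 : ℝ) * y ^ (1 / 2 : ℝ) := by
  norm_num [heinzMean]

lemma convexOn_heinzMean {x y : ℝ} (hx : 0 < x) (hy : 0 < y) :
    ConvexOn ℝ Set.univ (heinzMean x y) := by
  have h : heinzMean x y = fun u => (y / 2) * (x / y) ^ u + (x / 2) * (y / x) ^ u := by
    funext u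
    rw [heinzMean, Real.div_rpow hx.le hy.le, Real.div_rpow hy.le hx.le, Real.rpow_sub hy,
      Real.rpow_sub hx, Real.rpow_one, Real.rpow_one]
    field_simp
  rw [h]
  exact ((convexOn_rpow_left (div_pos hx hy)).smul (by positivity)).add
    ((convexOn_rpow_left (div_pos hy hx)).smul (by positivity))

lemma ConvexOn.le_of_map_one_sub {D : Set ℝ} {g : ℝ → ℝ} (hg : ConvexOn ℝ D g)
    (hsymm : ∀ u, g (1 - u) = g u) {s : ℝ} (hs : s ∈ D) (hs' : 1 - s ∈ D) : g (1 / 2) ≤ g s := by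
  have h := hg.2 hs hs' (by norm_num : (0 : ℝ) ≤ 1 / 2) (by norm_num : (0 : ℝ) ≤ 1 / 2)
    (by norm_num)
  simp only [hsymm, smul_eq_mul] at h
  rw [show 1 / 2 * s + 1 / 2 * (1 - s) = (1 / 2 : ℝ) by ring] at h
  linarith

lemma ConvexOn.div_mul_sub_le_sub {D : Set ℝ} {g : ℝ → ℝ} (hg : ConvexOn ℝ D g) {a s t : ℝ}
    (ha : a ∈ D) (ht : t ∈ D) (hast : (a < s ∧ s ≤ t) ∨ (t ≤ s ∧ s < a)) :
    (t - s) / (s - a) * (g s - g a) ≤ g t - g s := by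
  rcases hast with ⟨has, hst⟩ | ⟨hts, hsa⟩
  · obtain rfl | hst := hst.eq_or_lt
    · simp
    have h := hg.slope_mono_adjacent ha ht has hst
    rw [div_le_div_iff₀ (by linarith) (by linarith)] at h
    rw [div_mul_eq_mul_div, div_le_iff₀ (by linarith)]
    linarith
  · obtain rfl | hts := hts.eq_or_lt
    · simp
    have h := hg.slope_mono_adjacent ht ha hts hsa
    rw [div_le_div_iff₀ (by linarith) (by linarith)] at h
    rw [div_mul_eq_mul_div, div_le_iff_of_neg (by linarith)]
    linarith

section HadamardCombination

variable {m ι 𝕜 : Type*} [Fintype ι] [RCLike 𝕜]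

noncomputable abbrev hadamardCombination (R : ι → Matrix m m 𝕜) :
    (ι × ι → ℝ) →ₗ[ℝ] Matrix m m 𝕜 :=
  Fintype.linearCombination ℝ fun pq => R pq.1 ⊙ R pq.2

lemma sum_smul_hadamard_sum_smul (R : ι → Matrix m m 𝕜) (a b : ι → ℝ) :
    (∑ p, a p • R p) ⊙ (∑ q, b q • R q) = hadamardCombination R fun pq => a pq.1 * b pq.2 := by
  ext i j
  simp only [Fintype.linearCombination_apply, Fintype.sum_prod_type, hadamard_apply,
    Matrix.sum_apply, Matrix.smul_apply, Finset.sum_mul_sum, mul_smul, smul_mul_smul_comm]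

lemma hadamardCombination_eq_avg_swap (R : ι → Matrix m m 𝕜) (w : ι × ι → ℝ) :
    hadamardCombination R w = hadamardCombination R fun pq => (w pq + w pq.swap) / 2 := by
  have hswap : hadamardCombination R (w ∘ Prod.swap) = hadamardCombination R w := by
    simp only [Fintype.linearCombination_apply]
    exact Fintype.sum_equiv (Equiv.prodComm ι ι) _ _ fun pq => by
      simp [hadamard_comm (R pq.1)]
  have h : (fun pq => (w pq + w pq.swap) / 2) = (1 / 2 : ℝ) • (w + w ∘ Prod.swap) := by
    funext pq; simp [div_eq_inv_mul]
  rw [h, map_smul, map_add, hswap, ← two_smul ℝ, smul_smul]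
  norm_num

lemma posSemidef_hadamardCombination {R : ι → Matrix m m 𝕜} (hR : ∀ p, (R p).PosSemidef)
    {w : ι × ι → ℝ} (hw : ∀ p q, 0 ≤ w (p, q) + w (q, p)) :
    (hadamardCombination R w).PosSemidef := by
  rw [hadamardCombination_eq_avg_swap, Fintype.linearCombination_apply]
  exact posSemidef_sum _ fun pq _ =>
    ((hR pq.1).hadamard (hR pq.2)).smul (div_nonneg (hw pq.1 pq.2) zero_le_two)

end HadamardCombination

section RpowCombination

variable {m ι 𝕜 : Type*} [Fintype ι] [RCLike 𝕜] {lam : ι → ℝ} {R : ι → Matrix m m 𝕜}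
  {S : ℝ → Matrix m m 𝕜}

lemma hadamard_eq_hadamardCombination (hS : ∀ u, S u = ∑ p, lam p ^ u • R p) (u v : ℝ) :
    S u ⊙ S v = hadamardCombination R fun pq => lam pq.1 ^ u * lam pq.2 ^ v := by
  rw [hS, hS, sum_smul_hadamard_sum_smul]

lemma posSemidef_hadamard_sub_hadamard_half (hlam : ∀ p, 0 < lam p)
    (hR : ∀ p, (R p).PosSemidef) (hS : ∀ u, S u = ∑ p, lam p ^ u • R p) (s : ℝ) :
    (S s ⊙ S (1 - s) - S (1 / 2) ⊙ S (1 / 2)).PosSemidef := by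
  simp only [hadamard_eq_hadamardCombination hS, ← map_sub]
  refine posSemidef_hadamardCombination hR fun p q => ?_
  have h := (convexOn_heinzMean (hlam p) (hlam q)).le_of_map_one_sub (heinzMean_one_sub _ _)
    (Set.mem_univ s) (Set.mem_univ (1 - s))
  have hs := two_mul_heinzMean (lam p) (lam q) s
  have hh := heinzMean_half (lam p) (lam q)
  simp only [Pi.sub_apply]
  linear_combination 2 * h + hs - 2 * hh

lemma posSemidef_callebaut_refinement (hlam : ∀ p, 0 < lam p)
    (hR : ∀ p, (R p).PosSemidef) (hS : ∀ u, S u = ∑ p, lam p ^ u • R p) {s t : ℝ}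
    (hst : (1 / 2 < s ∧ s ≤ t) ∨ (t ≤ s ∧ s < 1 / 2)) :
    (S t ⊙ S (1 - t) - (S s ⊙ S (1 - s) +
      ((t - s) / (s - 1 / 2)) • (S s ⊙ S (1 - s) - S (1 / 2) ⊙ S (1 / 2)))).PosSemidef := by
  simp only [hadamard_eq_hadamardCombination hS, ← map_sub, ← map_smul, ← map_add]
  refine posSemidef_hadamardCombination hR fun p q => ?_
  have h := (convexOn_heinzMean (hlam p) (hlam q)).div_mul_sub_le_sub
    (Set.mem_univ _) (Set.mem_univ t) hst
  have ht := two_mul_heinzMean (lam p) (lam q) t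
  have hs := two_mul_heinzMean (lam p) (lam q) s
  have hh := heinzMean_half (lam p) (lam q)
  simp only [Pi.sub_apply, Pi.add_apply, Pi.smul_apply, smul_eq_mul]
  linear_combination 2 * h + ht - hs - (t - s) / (s - 1 / 2) * (hs - 2 * hh)

end RpowCombination

lemma Matrix.IsHermitian.cfc_eq_sum_smul_vecMulVec {n 𝕜 : Type*} [Fintype n] [DecidableEq n]
    [RCLike 𝕜] {C : Matrix n n 𝕜} (hC : C.IsHermitian) (f : ℝ → ℝ) :
    cfc f C = ∑ i, f (hC.eigenvalues i) •
      vecMulVec (fun k => (hC.eigenvectorUnitary : Matrix n n 𝕜) k i)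
        (star fun k => (hC.eigenvectorUnitary : Matrix n n 𝕜) k i) := by
  ext k l
  rw [hC.cfc_eq, IsHermitian.cfc, Unitary.conjStarAlgAut_apply]
  simp only [mul_apply, diagonal_apply, Function.comp_apply, Matrix.sum_apply, Matrix.smul_apply,
    vecMulVec_apply, Pi.star_apply, star_apply]
  refine Finset.sum_congr rfl fun i _ => ?_
  rw [Finset.sum_eq_single i (fun j _ hj => by simp [hj]) (by simp)]
  simp only [if_true, RCLike.real_smul_eq_coe_mul]
  ring

section GeometricMean

variable {d : ℕ} {A B : Matrix (Fin d) (Fin d) ℂ}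

lemma mpow_isHermitian (A : Matrix (Fin d) (Fin d) ℂ) (r : ℝ) : (mpow A r).IsHermitian :=
  cfc_predicate _ A

lemma mpow_mul_mpow_neg (hA : A.PosDef) (r : ℝ) : mpow A r * mpow A (-r) = 1 := by
  have hcont : ∀ f : ℝ → ℝ, ContinuousOn f (spectrum ℝ A) := fun f =>
    A.finite_real_spectrum.continuousOn f
  rw [mpow, mpow, ← cfc_mul _ _ A (hcont _) (hcont _), ← cfc_one ℝ A hA.1.isSelfAdjoint]
  refine cfc_congr fun x hx => ?_
  have hx : 0 < x := by
    rw [hA.1.spectrum_real_eq_range_eigenvalues] at hx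
    obtain ⟨i, rfl⟩ := hx
    exact hA.eigenvalues_pos i
  simp [← Real.rpow_add hx]

lemma posDef_mpow_neg_mul_mul_mpow_neg (hA : A.PosDef) (hB : B.PosDef) (r : ℝ) :
    (mpow A (-r) * B * mpow A (-r)).PosDef := by
  have hinj : Function.Injective (mpow A (-r)).mulVec := Function.LeftInverse.injective
    (g := (mpow A r).mulVec) fun x => by rw [mulVec_mulVec, mpow_mul_mpow_neg hA, one_mulVec]
  simpa only [(mpow_isHermitian A (-r)).eq] using hB.conjTranspose_mul_mul_same hinj

lemma exists_mwgm_eq_sum_rpow_smul (hA : A.PosDef) (hB : B.PosDef) :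
    ∃ (lam : Fin d → ℝ) (R : Fin d → Matrix (Fin d) (Fin d) ℂ),
      (∀ i, 0 < lam i) ∧ (∀ i, (R i).PosSemidef) ∧
      ∀ μ : ℝ, mwgm μ A B = ∑ i, lam i ^ μ • R i := by
  have hC := posDef_mpow_neg_mul_mul_mpow_neg hA hB (1 / 2)
  set U := (hC.1.eigenvectorUnitary : Matrix (Fin d) (Fin d) ℂ)
  refine ⟨hC.1.eigenvalues,
    fun i => mpow A (1 / 2) * vecMulVec (fun k => U k i) (star fun k => U k i) * mpow A (1 / 2),
    hC.eigenvalues_pos, fun i => ?_, fun μ => ?_⟩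
  · simpa only [(mpow_isHermitian A _).eq] using
      (posSemidef_vecMulVec_self_star fun k => U k i).mul_mul_conjTranspose_same (mpow A (1 / 2))
  · rw [mwgm, show mpow _ μ = _ from hC.1.cfc_eq_sum_smul_vecMulVec fun x => x ^ μ,
      Matrix.mul_sum, Matrix.sum_mul]
    simp only [mul_smul_comm, smul_mul_assoc]
    rfl

lemma exists_sum_mwgm_eq_sum_rpow_smul {ι : Type*} [Fintype ι]
    {A B : ι → Matrix (Fin d) (Fin d) ℂ} (hA : ∀ j, (A j).PosDef) (hB : ∀ j, (B j).PosDef) :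
    ∃ (lam : ι × Fin d → ℝ) (R : ι × Fin d → Matrix (Fin d) (Fin d) ℂ),
      (∀ p, 0 < lam p) ∧ (∀ p, (R p).PosSemidef) ∧
      ∀ μ : ℝ, ∑ j, mwgm μ (A j) (B j) = ∑ p, lam p ^ μ • R p := by
  choose lam R hlam hR hmwgm using fun j => exists_mwgm_eq_sum_rpow_smul (hA j) (hB j)
  refine ⟨fun p => lam p.1 p.2, fun p => R p.1 p.2, fun p => hlam p.1 p.2, fun p => hR p.1 p.2,
    fun μ => ?_⟩
  simp only [hmwgm, Fintype.sum_prod_type]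

end GeometricMean

/-- Refinement of the Callebaut inequality for Hadamard products: writing
`S_u = Σ_j (A_j ♯_u B_j)` and `G = Σ_j (A_j ♯ B_j)`, if `1 ≥ t ≥ s > 1/2` or
`0 ≤ t ≤ s < 1/2`, then
`S_s ∘ S_{1−s} + ((t−s)/(s−1/2))(S_s ∘ S_{1−s} − G ∘ G) ≤ S_t ∘ S_{1−t}`, and in
particular `S_s ∘ S_{1−s} ≤ S_t ∘ S_{1−t}`, in the Loewner order. -/
theorem callebaut_hadamard_refinement {d n : ℕ}
    (A B : Fin n → Matrix (Fin d) (Fin d) ℂ)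
    (hA : ∀ j, (A j).PosDef) (hB : ∀ j, (B j).PosDef)
    (s t : ℝ)
    (hst : (1 ≥ t ∧ t ≥ s ∧ s > 1/2) ∨ (0 ≤ t ∧ t ≤ s ∧ s < 1/2)) :
    ((∑ j, mwgm t (A j) (B j)).hadamard (∑ j, mwgm (1 - t) (A j) (B j)) -
      ((∑ j, mwgm s (A j) (B j)).hadamard (∑ j, mwgm (1 - s) (A j) (B j)) +
        ((t - s) / (s - 1/2)) •
          ((∑ j, mwgm s (A j) (B j)).hadamard (∑ j, mwgm (1 - s) (A j) (B j)) -
            (∑ j, mwgm (1/2) (A j) (B j)).hadamard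
              (∑ j, mwgm (1/2) (A j) (B j))))).PosSemidef ∧
    ((∑ j, mwgm t (A j) (B j)).hadamard (∑ j, mwgm (1 - t) (A j) (B j)) -
      (∑ j, mwgm s (A j) (B j)).hadamard (∑ j, mwgm (1 - s) (A j) (B j))).PosSemidef := by
  obtain ⟨lam, R, hlam, hR, hS⟩ := exists_sum_mwgm_eq_sum_rpow_smul hA hB
  have hst' : (1 / 2 < s ∧ s ≤ t) ∨ (t ≤ s ∧ s < 1 / 2) := by
    rcases hst with ⟨-, hts, hs⟩ | ⟨-, hts, hs⟩
    exacts [.inl ⟨hs, hts⟩, .inr ⟨hts, hs⟩]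
  have hc : 0 ≤ (t - s) / (s - 1 / 2) := by
    rcases hst' with ⟨hs, hts⟩ | ⟨hts, hs⟩
    · exact div_nonneg (by linarith) (by linarith)
    · exact div_nonneg_of_nonpos (by linarith) (by linarith)
  have hrefine := posSemidef_callebaut_refinement hlam hR hS hst'
  have hgap := (posSemidef_hadamard_sub_hadamard_half hlam hR hS s).smul hc
  refine ⟨hrefine, ?_⟩
  simpa only [sub_add_eq_sub_sub, sub_add_cancel] using hrefine.add hgap
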